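/- Let D, k be positive integers and n divisible by D. Construct G on n vertices as follows: partition the vertices into n/D layers of D vertices each, and join every vertex in layer i to every vertex in layer i+1 for 1 ≤ i < n/D. Then G has minimum degree at least D, and for any (k,1)-contraction C of G (i.e., dist_{ℓ_C}(u,v) ≥ dist(u,v)/k − 1 for all u,v), every connected component of (V,C) meets at most k+1 layers; hence G/C has at least n/((k+1)D) vertices. -/

import Mathlib

open Classical

/-!
Along any walk the layer index changes by at most one per edge, so `dist(u, v)` is at least
the layer gap `|i - j|`. If `u` and `v` are joined by contracted edges, their contracted
distance is `0`, and the `(k, 1)`-contraction inequality forces `|i - j| / k - 1 ≤ 0`.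
Hence a component of `(V, C)` meets at most `k + 1` layers; choosing one vertex per layer,
every component is hit at most `k + 1` times, which gives at least `L / (k + 1)` components.
-/

noncomputable def walkLen {V : Type*} (G : SimpleGraph V) (ℓ : Sym2 V → ℝ)
    {u v : V} (w : G.Walk u v) : ℝ := (w.edges.map ℓ).sum

noncomputable def gdist {V : Type*} (G : SimpleGraph V) (ℓ : Sym2 V → ℝ) (u v : V) : ℝ :=
  sInf {x : ℝ | ∃ w : G.Walk u v, walkLen G ℓ w = x}

noncomputable def zeroOn {V : Type*} (ℓ : Sym2 V → ℝ) (C : Set (Sym2 V)) : Sym2 V → ℝ :=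
  fun e => if e ∈ C then 0 else ℓ e

section WeightedDistance

variable {V : Type*} {G : SimpleGraph V} {u v : V}

lemma walkLen_one (w : G.Walk u v) : walkLen G (fun _ => (1 : ℝ)) w = w.length := by
  simp [walkLen, SimpleGraph.Walk.length_edges]

lemma walkLen_nonneg {ℓ : Sym2 V → ℝ} (hℓ : ∀ e, 0 ≤ ℓ e) (w : G.Walk u v) :
    0 ≤ walkLen G ℓ w :=
  List.sum_nonneg (by simpa using fun e _ => hℓ e)

lemma gdist_le_walkLen {ℓ : Sym2 V → ℝ} (hℓ : ∀ e, 0 ≤ ℓ e) (w : G.Walk u v) :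
    gdist G ℓ u v ≤ walkLen G ℓ w :=
  csInf_le ⟨0, by rintro x ⟨w, rfl⟩; exact walkLen_nonneg hℓ w⟩ ⟨w, rfl⟩

lemma le_gdist {ℓ : Sym2 V → ℝ} {c : ℝ} (huv : G.Reachable u v)
    (h : ∀ w : G.Walk u v, c ≤ walkLen G ℓ w) : c ≤ gdist G ℓ u v :=
  le_csInf (let ⟨w⟩ := huv; ⟨_, w, rfl⟩) (by rintro x ⟨w, rfl⟩; exact h w)

lemma zeroOn_nonneg {ℓ : Sym2 V → ℝ} (hℓ : ∀ e, 0 ≤ ℓ e) (C : Set (Sym2 V)) (e : Sym2 V) :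
    0 ≤ zeroOn ℓ C e := by
  unfold zeroOn
  split_ifs
  exacts [le_rfl, hℓ e]

lemma fromEdgeSet_le_of_subset_edgeSet {C : Set (Sym2 V)} (hC : C ⊆ G.edgeSet) :
    SimpleGraph.fromEdgeSet C ≤ G :=
  G.fromEdgeSet_le.mpr (Set.sdiff_subset.trans hC)

lemma gdist_zeroOn_nonpos {ℓ : Sym2 V → ℝ} (hℓ : ∀ e, 0 ≤ ℓ e) {C : Set (Sym2 V)}
    (hC : C ⊆ G.edgeSet) (huv : (SimpleGraph.fromEdgeSet C).Reachable u v) :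
    gdist G (zeroOn ℓ C) u v ≤ 0 := by
  obtain ⟨p⟩ := huv
  have hle := fromEdgeSet_le_of_subset_edgeSet hC
  have hzero : walkLen G (zeroOn ℓ C) (p.mapLe hle) = 0 := by
    refine List.sum_eq_zero fun x hx => ?_
    obtain ⟨e, he, rfl⟩ := List.mem_map.mp hx
    rw [SimpleGraph.Walk.edges_mapLe_eq_edges] at he
    obtain ⟨heC, -⟩ : e ∈ C ∧ ¬e.IsDiag := by simpa using p.edges_subset_edgeSet he
    simp [zeroOn, heC]
  exact hzero ▸ gdist_le_walkLen (zeroOn_nonneg hℓ C) (p.mapLe hle)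

end WeightedDistance

section Potential

variable {V : Type*} {G : SimpleGraph V} {f : V → ℤ}

lemma SimpleGraph.Walk.natAbs_sub_le_length (hf : ∀ x y, G.Adj x y → (f x - f y).natAbs ≤ 1)
    {u v : V} (w : G.Walk u v) : (f u - f v).natAbs ≤ w.length := by
  induction w with
  | nil => simp
  | cons h _ ih =>
    have := hf _ _ h
    rw [SimpleGraph.Walk.length_cons]
    omega

lemma natAbs_sub_le_gdist (hf : ∀ x y, G.Adj x y → (f x - f y).natAbs ≤ 1) {u v : V}
    (huv : G.Reachable u v) : ((f u - f v).natAbs : ℝ) ≤ gdist G (fun _ => 1) u v :=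
  le_gdist huv fun w => by rw [walkLen_one]; exact_mod_cast w.natAbs_sub_le_length hf

lemma natAbs_sub_le_of_reachable_contraction (hf : ∀ x y, G.Adj x y → (f x - f y).natAbs ≤ 1)
    {k : ℕ} (hk : 0 < k) {C : Set (Sym2 V)} (hC : C ⊆ G.edgeSet)
    (hcontr : ∀ u v, gdist G (fun _ => (1 : ℝ)) u v / k - 1 ≤
      gdist G (zeroOn (fun _ => (1 : ℝ)) C) u v)
    {u v : V} (huv : (SimpleGraph.fromEdgeSet C).Reachable u v) :
    (f u - f v).natAbs ≤ k := by
  have hGuv : G.Reachable u v := huv.mono (fromEdgeSet_le_of_subset_edgeSet hC)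
  have hk' : (0 : ℝ) < k := by exact_mod_cast hk
  have hdist : gdist G (fun _ => (1 : ℝ)) u v / k ≤ 1 := by
    linarith [hcontr u v, gdist_zeroOn_nonpos (fun _ => zero_le_one) hC huv]
  rw [div_le_one hk'] at hdist
  exact_mod_cast (natAbs_sub_le_gdist hf hGuv).trans hdist

end Potential

lemma Finset.card_le_of_forall_le_add {s : Finset ℕ} {k : ℕ}
    (h : ∀ a ∈ s, ∀ b ∈ s, b ≤ a + k) : s.card ≤ k + 1 := by
  rcases s.eq_empty_or_nonempty with rfl | hs
  · simp
  calc s.card ≤ (Finset.Icc (s.min' hs) (s.min' hs + k)).card :=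
        Finset.card_le_card fun b hb =>
          Finset.mem_Icc.mpr ⟨s.min'_le b hb, h _ (s.min'_mem hs) b hb⟩
    _ = k + 1 := by simp only [Nat.card_Icc]; omega

lemma le_mul_card_of_fibers_le_add {L k : ℕ} {β : Type*} [Finite β] (g : Fin L → β)
    (hg : ∀ i j, g i = g j → j.val ≤ i.val + k) : L ≤ (k + 1) * Nat.card β := by
  have := Fintype.ofFinite β
  have hfiber : ∀ b, (Finset.univ.filter fun i => g i = b).card ≤ k + 1 := fun b => by
    rw [← Finset.card_map Fin.valEmbedding]
    refine Finset.card_le_of_forall_le_add ?_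
    simp only [Finset.mem_map, Finset.mem_filter, Finset.mem_univ, true_and,
      Fin.valEmbedding_apply]
    rintro _ ⟨i, hi, rfl⟩ _ ⟨j, hj, rfl⟩
    exact hg i j (hi.trans hj.symm)
  simpa [Nat.card_eq_fintype_card] using Finset.card_le_mul_card_image_of_maps_to (s := Finset.univ) (t := Finset.univ)
    (fun i _ => Finset.mem_univ (g i)) (k + 1) fun b _ => hfiber b

section Layered

variable {L : ℕ} {α : Type*}

def layeredGraph (L : ℕ) (α : Type*) : SimpleGraph (Fin L × α) :=
  SimpleGraph.fromRel fun x y => x.1.val + 1 = y.1.val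

lemma layeredGraph_adj {x y : Fin L × α} :
    (layeredGraph L α).Adj x y ↔ x.1.val + 1 = y.1.val ∨ y.1.val + 1 = x.1.val := by
  rw [layeredGraph, SimpleGraph.fromRel_adj, and_iff_right_iff_imp]
  rintro h rfl
  omega

lemma layeredGraph_natAbs_sub_le {x y : Fin L × α} (h : (layeredGraph L α).Adj x y) :
    ((x.1.val : ℤ) - y.1.val).natAbs ≤ 1 := by
  rcases layeredGraph_adj.mp h with h | h <;> omega

lemma exists_adjacent_layer (hL : 2 ≤ L) (i : Fin L) :
    ∃ j : Fin L, i.val + 1 = j.val ∨ j.val + 1 = i.val := by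
  by_cases hi : i.val + 1 < L
  · exact ⟨⟨i.val + 1, hi⟩, Or.inl rfl⟩
  · exact ⟨⟨i.val - 1, by omega⟩, Or.inr (by simp; omega)⟩

lemma card_le_degree_layeredGraph [Fintype α] (hL : 2 ≤ L) (v : Fin L × α) :
    Fintype.card α ≤ (layeredGraph L α).degree v := by
  obtain ⟨j, hj⟩ := exists_adjacent_layer hL v.1
  rw [← SimpleGraph.card_neighborSet_eq_degree]
  exact Fintype.card_le_of_injective (fun a => ⟨(j, a), layeredGraph_adj.mpr hj⟩)
    fun a b hab => congrArg (fun x => x.1.2) hab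

end Layered

theorem layered_graph_lower_bound (D k L : ℕ) (hD : 0 < D) (hk : 0 < k) (hL : 2 ≤ L)
    (G : SimpleGraph (Fin L × Fin D))
    (hG : G = SimpleGraph.fromRel (fun x y => x.1.val + 1 = y.1.val)) :
    (∀ v, D ≤ G.degree v) ∧
    ∀ C : Set (Sym2 (Fin L × Fin D)), C ⊆ G.edgeSet →
      (∀ u v, gdist G (fun _ => (1 : ℝ)) u v / k - 1 ≤
          gdist G (zeroOn (fun _ => (1 : ℝ)) C) u v) →
      ((∀ u v, (SimpleGraph.fromEdgeSet C).Reachable u v →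
          ((u.1.val : ℤ) - v.1.val).natAbs ≤ k) ∧
       ((L : ℝ) / (k + 1) ≤ Nat.card ((SimpleGraph.fromEdgeSet C).ConnectedComponent))) := by
  replace hG : G = layeredGraph L (Fin D) := hG
  subst hG
  refine ⟨fun v => by simpa using card_le_degree_layeredGraph hL v, fun C hC hcontr => ?_⟩
  have hlayers : ∀ u v, (SimpleGraph.fromEdgeSet C).Reachable u v →
      ((u.1.val : ℤ) - v.1.val).natAbs ≤ k := fun u v =>
    natAbs_sub_le_of_reachable_contraction (fun _ _ => layeredGraph_natAbs_sub_le) hk hC hcontr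
  refine ⟨hlayers, ?_⟩
  have hcount := le_mul_card_of_fibers_le_add (k := k)
    (fun i => (SimpleGraph.fromEdgeSet C).connectedComponentMk (i, ⟨0, hD⟩))
    fun i j hij => by
      have := hlayers _ _ (SimpleGraph.ConnectedComponent.eq.mp hij.symm)
      dsimp only at this
      omega
  rw [div_le_iff₀ (by positivity), mul_comm]
  exact_mod_cast hcount
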